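/- arXiv:1803.06048 — 2 statements merged into one kernel-verified Lean document; each statement's English description precedes it below -/
import Mathlib

section
/- Let L and Φ be square-integrable real random variables on a probability space (Ω, 𝓕, P) with Var(Φ) > 0, and let T_lc, T_hc ∈ ℝ be constants such that the error term η := L − ((1−Φ)·T_lc + Φ·T_hc) satisfies E[η] = 0 and Cov(η, Φ) = 0. Then T_hc − T_lc = Cov(L, Φ)/Var(Φ) and T_lc = E[L] − (Cov(L, Φ)/Var(Φ))·E[Φ]; in particular T_lc and T_hc are determined by the joint distribution of (L, Φ). -/
open MeasureTheory

/-- Covariance of two real random variables: `Cov(X, Y) = E[X·Y] − E[X]·E[Y]`. -/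
noncomputable def cov {Ω : Type*} [MeasureSpace Ω] (X Y : Ω → ℝ) : ℝ :=
  (∫ ω, X ω * Y ω) - (∫ ω, X ω) * (∫ ω, Y ω)

/-- Variance of a real random variable: `Var(X) = Cov(X, X)`. -/
noncomputable def var {Ω : Type*} [MeasureSpace Ω] (X : Ω → ℝ) : ℝ := cov X X

/-! The residual `η` is `L − (T_lc + (T_hc − T_lc) Φ)`, so `E[η] = 0` and `Cov(η, Φ) = 0` are the
normal equations of the least-squares regression of `L` on `Φ`: the slope `T_hc − T_lc` is
`Cov(L, Φ) / Var(Φ)` and the intercept `T_lc` is `E[L] − slope · E[Φ]`. -/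

section AffineResidual

variable {Ω : Type*} [MeasureSpace Ω] [IsProbabilityMeasure (volume : Measure Ω)]
  {X Φ : Ω → ℝ}

lemma integral_sub_affine (hX : Integrable X) (hΦ : Integrable Φ) (a b : ℝ) :
    ∫ ω, X ω - (a + b * Φ ω) = (∫ ω, X ω) - a - b * ∫ ω, Φ ω := by
  have haff : Integrable (fun ω => a + b * Φ ω) := (integrable_const a).add (hΦ.const_mul b)
  rw [integral_sub hX haff,
    integral_add (integrable_const a) (hΦ.const_mul b), integral_const, integral_const_mul]
  simp only [probReal_univ, smul_eq_mul, one_mul]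
  ring

lemma cov_sub_affine_left (hX : MemLp X 2) (hΦ : MemLp Φ 2) (a b : ℝ) :
    cov (fun ω => X ω - (a + b * Φ ω)) Φ = cov X Φ - b * var Φ := by
  have hXi : Integrable X := hX.integrable one_le_two
  have hΦi : Integrable Φ := hΦ.integrable one_le_two
  have hXΦ : Integrable (fun ω => X ω * Φ ω) := hX.integrable_mul hΦ
  have hΦΦ : Integrable (fun ω => Φ ω * Φ ω) := hΦ.integrable_mul hΦ
  have hprod : ∫ ω, (X ω - (a + b * Φ ω)) * Φ ω
      = (∫ ω, X ω * Φ ω) - a * (∫ ω, Φ ω) - b * ∫ ω, Φ ω * Φ ω := by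
    simp only [sub_mul, add_mul, mul_assoc]
    have hquad : Integrable (fun ω => a * Φ ω + b * (Φ ω * Φ ω)) :=
      (hΦi.const_mul a).add (hΦΦ.const_mul b)
    rw [integral_sub hXΦ hquad,
      integral_add (hΦi.const_mul a) (hΦΦ.const_mul b), integral_const_mul, integral_const_mul]
    ring
  simp only [cov, var, hprod, integral_sub_affine hXi hΦi]
  ring

end AffineResidual

/-- Proposition 1 (identification of principal causal effects via zero site-level
correlation): if the error `η = L − ((1−Φ)·T_lc + Φ·T_hc)` has mean zero and is
uncorrelated with `Φ`, and `Var(Φ) > 0`, then `T_hc − T_lc = Cov(L,Φ)/Var(Φ)` and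
`T_lc = E[L] − (Cov(L,Φ)/Var(Φ))·E[Φ]`. -/
theorem stmt_0 {Ω : Type*} [MeasureSpace Ω]
    [IsProbabilityMeasure (volume : Measure Ω)]
    (L Φ : Ω → ℝ) (hL : MemLp L 2) (hΦ : MemLp Φ 2)
    (hvar : 0 < var Φ) (Tlc Thc : ℝ)
    (hmean : (∫ ω, (L ω - ((1 - Φ ω) * Tlc + Φ ω * Thc))) = 0)
    (hcov : cov (fun ω => L ω - ((1 - Φ ω) * Tlc + Φ ω * Thc)) Φ = 0) :
    Thc - Tlc = cov L Φ / var Φ ∧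
      Tlc = (∫ ω, L ω) - (cov L Φ / var Φ) * (∫ ω, Φ ω) := by
  have haffine : ∀ ω, (1 - Φ ω) * Tlc + Φ ω * Thc = Tlc + (Thc - Tlc) * Φ ω := fun ω => by ring
  simp only [haffine] at hmean hcov
  rw [integral_sub_affine (hL.integrable one_le_two) (hΦ.integrable one_le_two)] at hmean
  rw [cov_sub_affine_left hL hΦ] at hcov
  have hslope : Thc - Tlc = cov L Φ / var Φ := by
    rw [eq_div_iff hvar.ne']
    linarith
  exact ⟨hslope, by rw [← hslope]; linarith⟩
end

section
/- Let (Ω, 𝓕, P) be a probability space and let D₀, D₁ : Ω → T be measurable maps into the three-element type T = {e, lq, hq}. Assume No Defiers: almost surely it is not the case that D₀ = e and D₁ ≠ e; and No Flip-Floppers: almost surely it is not the case that (D₁ = lq and D₀ = hq) or (D₁ = hq and D₀ = lq). Then the Complier strata proportions satisfy P(D₁ = e and D₀ = lq) = P(D₀ = lq) − P(D₁ = lq), P(D₁ = e and D₀ = hq) = P(D₀ = hq) − P(D₁ = hq), and consequently the total Complier proportion satisfies P(D₁ = e and D₀ = lq) + P(D₁ = e and D₀ = hq) = P(D₁ = e)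 − P(D₀ = e). -/
/-! If `{Y = b}` lies in `{X = b}` and `Y ∈ {a, b}` on `{X = b}`, then `{X = b}` splits into the
disjoint pieces `{Y = a, X = b}` and `{Y = b}`. Under No Defiers and No Flip-Floppers this applies
to `X = D₀`, `Y = D₁`, `a = e` and `b ∈ {lq, hq}`; the total follows since `{lq, hq}` is the
complement of `{e}` for both `D₀` and `D₁`. -/

open MeasureTheory

/-- School types: ECHS (`e`), low-quality public (`lq`), high-quality public (`hq`). -/
inductive SchoolType : Type
  | e | lq | hq
  deriving DecidableEq

instance : MeasurableSpace SchoolType := ⊤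

theorem measureReal_and_eq_sub {Ω α : Type*} [MeasurableSpace Ω] {μ : Measure Ω}
    [IsFiniteMeasure μ] {X Y : Ω → α} {a b : α} (hab : a ≠ b)
    (hY : MeasurableSet {ω | Y ω = b}) (hsub : ∀ᵐ ω ∂μ, Y ω = b → X ω = b)
    (hcov : ∀ᵐ ω ∂μ, X ω = b → Y ω = a ∨ Y ω = b) :
    μ.real {ω | Y ω = a ∧ X ω = b} = μ.real {ω | X ω = b} - μ.real {ω | Y ω = b} := by
  have hsplit : {ω | X ω = b} =ᵐ[μ] ({ω | Y ω = a ∧ X ω = b} ∪ {ω | Y ω = b} : Set Ω) := by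
    rw [Filter.eventuallyEq_set]
    filter_upwards [hsub, hcov] with ω h₁ h₂
    simp only [Set.mem_union, Set.mem_ofPred_eq]
    tauto
  have hdisj : Disjoint {ω | Y ω = a ∧ X ω = b} {ω | Y ω = b} :=
    Set.disjoint_left.mpr fun ω h h' => hab (h.1.symm.trans h')
  rw [measureReal_congr hsplit, measureReal_union hdisj hY]
  ring

theorem SchoolType.measureReal_lq_add_hq {Ω : Type*} [MeasurableSpace Ω] {μ : Measure Ω}
    [IsProbabilityMeasure μ] {X : Ω → SchoolType} (hX : Measurable X) :
    μ.real {ω | X ω = .lq} + μ.real {ω | X ω = .hq} = 1 - μ.real {ω | X ω = .e} := by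
  have hcompl : {ω | X ω = .e}ᶜ = {ω | X ω = .lq} ∪ {ω | X ω = .hq} := by
    ext ω
    cases h : X ω <;> simp [h]
  have hdisj : Disjoint {ω | X ω = .lq} {ω | X ω = .hq} :=
    Set.disjoint_left.mpr fun ω h h' => by simp_all
  rw [← measureReal_union hdisj (hX (measurableSet_singleton _)), ← hcompl]
  exact probReal_compl_eq_one_sub (hX (measurableSet_singleton _))

/-- Under No Defiers and No Flip-Floppers, the Low- and High-Quality Complier
proportions are identified: `π_lc = P(D₀ = lq) − P(D₁ = lq)`,
`π_hc = P(D₀ = hq) − P(D₁ = hq)`, and the total Complier proportion equals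
`P(D₁ = e) − P(D₀ = e)`. -/
theorem stmt_9 {Ω : Type*} [MeasureSpace Ω]
    [IsProbabilityMeasure (volume : Measure Ω)]
    (D₀ D₁ : Ω → SchoolType) (hD₀ : Measurable D₀) (hD₁ : Measurable D₁)
    (hNoDefiers : ∀ᵐ ω, ¬(D₀ ω = .e ∧ D₁ ω ≠ .e))
    (hNoFlipFloppers :
      ∀ᵐ ω, ¬((D₁ ω = .lq ∧ D₀ ω = .hq) ∨ (D₁ ω = .hq ∧ D₀ ω = .lq))) :
    (volume {ω | D₁ ω = .e ∧ D₀ ω = .lq}).toReal =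
        (volume {ω | D₀ ω = .lq}).toReal - (volume {ω | D₁ ω = .lq}).toReal ∧
      (volume {ω | D₁ ω = .e ∧ D₀ ω = .hq}).toReal =
        (volume {ω | D₀ ω = .hq}).toReal - (volume {ω | D₁ ω = .hq}).toReal ∧
      (volume {ω | D₁ ω = .e ∧ D₀ ω = .lq}).toReal +
          (volume {ω | D₁ ω = .e ∧ D₀ ω = .hq}).toReal =
        (volume {ω | D₁ ω = .e}).toReal - (volume {ω | D₀ ω = .e}).toReal := by
  simp only [← measureReal_def]
  have complier (t : SchoolType) (ht : t ≠ .e) :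
      volume.real {ω | D₁ ω = .e ∧ D₀ ω = t} =
        volume.real {ω | D₀ ω = t} - volume.real {ω | D₁ ω = t} := by
    refine measureReal_and_eq_sub ht.symm (hD₁ (measurableSet_singleton t)) ?_ ?_ <;>
      filter_upwards [hNoDefiers, hNoFlipFloppers] with ω h₁ h₂ h <;>
      cases t <;> cases hD₀ω : D₀ ω <;> cases hD₁ω : D₁ ω <;> simp_all
  have hlq := complier .lq (by decide)
  have hhq := complier .hq (by decide)
  have hD₀_ne_e := SchoolType.measureReal_lq_add_hq (μ := volume) hD₀
  have hD₁_ne_e := SchoolType.measureReal_lq_add_hq (μ := volume) hD₁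
  exact ⟨hlq, hhq, by linarith⟩
end
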